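/- Let A, B be positive definite matrices and p ∈ [0,1]. Then 2·max{p,1−p}·(A∇B − A#B) ≥ A∇_p B − A#_p B ≥ 2·min{p,1−p}·(A∇B − A#B) in the Loewner order, where ∇ and # denote the unweighted (ν = 1/2) arithmetic and geometric means. -/

import Mathlib

/-!
Write `S = A^{1/2}` and `C = A^{-1/2} B A^{-1/2}`, so that `A = S S`, `B = S C S` and
`A #_ν B = S C^ν S`. Then `A ∇_ν B - A #_ν B = S g_ν(C) S`, where `g_ν(x) = (1-ν) + ν x - x^ν`
is the Jensen gap at `ν` of the convex function `t ↦ x^t` on `[0, 1]`. For any convex `φ`,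
comparing `φ(ν)` with `φ(0), φ(1/2), φ(1)` by convexity on `[0, 1/2]` and on `[1/2, 1]` bounds the
gap at `ν` between `2 min(ν, 1-ν)` and `2 max(ν, 1-ν)` times the gap at `1/2`. These scalar
bounds on the (positive) spectrum of `C` pass to `g_ν(C)` by monotonicity of the functional
calculus, and then through the congruence by `S`.
-/

open Matrix ComplexOrder

/-- Real power of a Hermitian matrix via the spectral theorem (functional calculus);
junk value `0` for non-Hermitian matrices. -/
noncomputable def Matrix.hrpow {n : ℕ} (A : Matrix (Fin n) (Fin n) ℂ) (r : ℝ) :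
    Matrix (Fin n) (Fin n) ℂ :=
  if h : A.IsHermitian then
    (h.eigenvectorUnitary : Matrix (Fin n) (Fin n) ℂ) *
      Matrix.diagonal (fun i => ((h.eigenvalues i ^ r : ℝ) : ℂ)) *
      (h.eigenvectorUnitary : Matrix (Fin n) (Fin n) ℂ)ᴴ
  else 0

/-- Weighted geometric mean `A #_ν B` of positive definite matrices:
`A^{1/2} (A^{-1/2} B A^{-1/2})^ν A^{1/2}`. -/
noncomputable def Matrix.gmean {n : ℕ} (A B : Matrix (Fin n) (Fin n) ℂ) (ν : ℝ) :
    Matrix (Fin n) (Fin n) ℂ :=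
  A.hrpow (1/2) * ((A.hrpow (-(1/2)) * B * A.hrpow (-(1/2))).hrpow ν) * A.hrpow (1/2)

/-- Quadratic weighted geometric mean `X ⓢ_ν Y = X* (|Y X⁻¹|²)^ν X`. -/
noncomputable def Matrix.qgmean {n : ℕ} (X Y : Matrix (Fin n) (Fin n) ℂ) (ν : ℝ) :
    Matrix (Fin n) (Fin n) ℂ :=
  Xᴴ * ((Y * X⁻¹)ᴴ * (Y * X⁻¹)).hrpow ν * X

open Set

def jensenGap (φ : ℝ → ℝ) (t : ℝ) : ℝ := (1 - t) * φ 0 + t * φ 1 - φ t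

theorem ConvexOn.mul_apply_le_of_add_eq {s : Set ℝ} {φ : ℝ → ℝ} (hφ : ConvexOn ℝ s φ)
    {x y z a b c : ℝ} (hx : x ∈ s) (hy : y ∈ s) (ha : 0 ≤ a) (hb : 0 ≤ b) (hc : 0 < c)
    (habc : a + b = c) (hz : a * x + b * y = c * z) : c * φ z ≤ a * φ x + b * φ y := by
  have key := hφ.2 hx hy (div_nonneg ha hc.le) (div_nonneg hb hc.le)
    (by rw [← add_div, habc, div_self hc.ne'])
  have hz' : (a / c) • x + (b / c) • y = z := by
    simp only [smul_eq_mul]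
    field_simp
    linarith
  rw [hz', smul_eq_mul, smul_eq_mul] at key
  calc c * φ z ≤ c * (a / c * φ x + b / c * φ y) := by gcongr
    _ = a * φ x + b * φ y := by field_simp

namespace ConvexOn

variable {φ : ℝ → ℝ} {t : ℝ}

theorem two_mul_min_mul_jensenGap_half_le (hφ : ConvexOn ℝ (Icc 0 1) φ)
    (ht : t ∈ Icc (0 : ℝ) 1) : 2 * min t (1 - t) * jensenGap φ (1 / 2) ≤ jensenGap φ t := by
  obtain ⟨ht0, ht1⟩ := ht
  have h0 : (0 : ℝ) ∈ Icc (0 : ℝ) 1 := by norm_num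
  have h1 : (1 : ℝ) ∈ Icc (0 : ℝ) 1 := by norm_num
  have hhalf : (1 / 2 : ℝ) ∈ Icc (0 : ℝ) 1 := by norm_num
  unfold jensenGap
  rcases le_total t (1 / 2) with hle | hge
  · have := hφ.mul_apply_le_of_add_eq h0 hhalf (a := 1 - 2 * t) (b := 2 * t) (z := t)
      (by linarith) (by linarith) one_pos (by ring) (by ring)
    rw [min_eq_left (by linarith)]
    linarith
  · have := hφ.mul_apply_le_of_add_eq h1 hhalf (a := 2 * t - 1) (b := 2 - 2 * t) (z := t)
      (by linarith) (by linarith) one_pos (by ring) (by ring)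
    rw [min_eq_right (by linarith)]
    linarith

theorem jensenGap_le_two_mul_max_mul_jensenGap_half (hφ : ConvexOn ℝ (Icc 0 1) φ)
    (ht : t ∈ Icc (0 : ℝ) 1) : jensenGap φ t ≤ 2 * max t (1 - t) * jensenGap φ (1 / 2) := by
  have h0 : (0 : ℝ) ∈ Icc (0 : ℝ) 1 := by norm_num
  have h1 : (1 : ℝ) ∈ Icc (0 : ℝ) 1 := by norm_num
  obtain ⟨ht0, ht1⟩ := ht
  unfold jensenGap
  rcases le_total t (1 / 2) with hle | hge
  · have := hφ.mul_apply_le_of_add_eq ⟨ht0, ht1⟩ h1 (a := 1) (b := 1 - 2 * t)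
      (c := 2 - 2 * t) (z := 1 / 2) zero_le_one (by linarith) (by linarith) (by ring) (by ring)
    rw [max_eq_right (by linarith)]
    linarith
  · have := hφ.mul_apply_le_of_add_eq ⟨ht0, ht1⟩ h0 (a := 1) (b := 2 * t - 1)
      (c := 2 * t) (z := 1 / 2) zero_le_one (by linarith) (by linarith) (by ring) (by ring)
    rw [max_eq_left (by linarith)]
    linarith

end ConvexOn

open scoped MatrixOrder

namespace Matrix

variable {n : ℕ} {A B : Matrix (Fin n) (Fin n) ℂ}

theorem continuousOn_spectrum_real (f : ℝ → ℝ) (A : Matrix (Fin n) (Fin n) ℂ) :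
    ContinuousOn f (spectrum ℝ A) :=
  A.finite_real_spectrum.continuousOn f

-- Lets `cfc_cont_tac` discharge the continuity side conditions of the `cfc` lemmas.
attribute [fun_prop] continuousOn_spectrum_real

theorem IsHermitian.hrpow_eq_cfc (hA : A.IsHermitian) (r : ℝ) :
    A.hrpow r = cfc (· ^ r : ℝ → ℝ) A := by
  rw [hrpow, dif_pos hA, hA.cfc_eq, IsHermitian.cfc, Unitary.conjStarAlgAut_apply]
  rfl

theorem IsHermitian.isHermitian_hrpow (hA : A.IsHermitian) (r : ℝ) :
    (A.hrpow r).IsHermitian := by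
  rw [hA.hrpow_eq_cfc]
  exact cfc_predicate _ A

theorem PosDef.pos_of_mem_spectrum (hA : A.PosDef) {x : ℝ} (hx : x ∈ spectrum ℝ A) : 0 < x :=
  (isStrictlyPositive_iff_posDef.mpr hA).spectrum_pos hx

theorem PosDef.hrpow_add (hA : A.PosDef) (r s : ℝ) :
    A.hrpow (r + s) = A.hrpow r * A.hrpow s := by
  simp only [hA.1.hrpow_eq_cfc]
  rw [← cfc_mul _ _ A]
  exact cfc_congr fun x hx => Real.rpow_add (hA.pos_of_mem_spectrum hx) r s

theorem IsHermitian.hrpow_zero (hA : A.IsHermitian) : A.hrpow 0 = 1 := by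
  simp only [hA.hrpow_eq_cfc, Real.rpow_zero]
  exact cfc_const_one ℝ A

theorem IsHermitian.hrpow_one (hA : A.IsHermitian) : A.hrpow 1 = A := by
  simp only [hA.hrpow_eq_cfc, Real.rpow_one]
  exact cfc_id' ℝ A

theorem PosDef.hrpow_half_mul_hrpow_half (hA : A.PosDef) :
    A.hrpow (1 / 2) * A.hrpow (1 / 2) = A := by
  rw [← hA.hrpow_add]; norm_num [hA.1.hrpow_one]

theorem PosDef.hrpow_half_mul_hrpow_neg_half (hA : A.PosDef) :
    A.hrpow (1 / 2) * A.hrpow (-(1 / 2)) = 1 := by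
  rw [← hA.hrpow_add]; norm_num [hA.1.hrpow_zero]

theorem PosDef.hrpow_neg_half_mul_hrpow_half (hA : A.PosDef) :
    A.hrpow (-(1 / 2)) * A.hrpow (1 / 2) = 1 := by
  rw [← hA.hrpow_add]; norm_num [hA.1.hrpow_zero]

theorem PosDef.hrpow_half_conj_hrpow_neg_half_conj (hA : A.PosDef) :
    A.hrpow (1 / 2) * (A.hrpow (-(1 / 2)) * B * A.hrpow (-(1 / 2))) * A.hrpow (1 / 2) = B := by
  simp only [← mul_assoc, hA.hrpow_half_mul_hrpow_neg_half, one_mul]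
  rw [mul_assoc, hA.hrpow_neg_half_mul_hrpow_half, mul_one]

theorem PosDef.posDef_conj_hrpow_neg_half (hA : A.PosDef) (hB : B.PosDef) :
    (A.hrpow (-(1 / 2)) * B * A.hrpow (-(1 / 2))).PosDef := by
  have hT : IsUnit (A.hrpow (-(1 / 2))) :=
    ⟨⟨_, _, hA.hrpow_neg_half_mul_hrpow_half, hA.hrpow_half_mul_hrpow_neg_half⟩, rfl⟩
  simpa only [star_eq_conjTranspose, (hA.1.isHermitian_hrpow _).eq] using
    hT.posDef_star_left_conjugate_iff.mpr hB

theorem PosDef.smul_add_smul_sub_gmean_eq (hA : A.PosDef) (hB : B.IsHermitian) (ν : ℝ) :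
    (((1 - ν : ℝ) : ℂ) • A + ((ν : ℝ) : ℂ) • B) - A.gmean B ν =
      A.hrpow (1 / 2) * cfc (fun x : ℝ => jensenGap (x ^ ·) ν)
        (A.hrpow (-(1 / 2)) * B * A.hrpow (-(1 / 2))) * A.hrpow (1 / 2) := by
  set S := A.hrpow (1 / 2)
  set C := A.hrpow (-(1 / 2)) * B * A.hrpow (-(1 / 2))
  have hC : C.IsHermitian := by
    simpa only [(hA.1.isHermitian_hrpow _).eq] using
      isHermitian_conjTranspose_mul_mul (A.hrpow (-(1 / 2))) hB
  have hgap : cfc (fun x : ℝ => jensenGap (x ^ ·) ν) C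
      = (1 - ν) • 1 + ν • C - cfc (· ^ ν : ℝ → ℝ) C := by
    simp only [jensenGap, Real.rpow_zero, Real.rpow_one, mul_one]
    rw [cfc_sub, cfc_add, cfc_const_mul, cfc_id' ℝ C, cfc_const (1 - ν) C,
      Algebra.algebraMap_eq_smul_one]
  rw [hgap, ← hC.hrpow_eq_cfc, Complex.coe_smul, Complex.coe_smul]
  change _ - S * C.hrpow ν * S = _
  conv_lhs =>
    rw [← hA.hrpow_half_mul_hrpow_half, ← hA.hrpow_half_conj_hrpow_neg_half_conj (B := B)]
  simp only [mul_sub, sub_mul, mul_add, add_mul, mul_smul_comm, smul_mul_assoc, mul_one]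
  rfl

theorem smul_conj_cfc (r : ℝ) (S C : Matrix (Fin n) (Fin n) ℂ) (f : ℝ → ℝ) :
    r • (S * cfc f C * S) = S * cfc (fun x => r * f x) C * S := by
  rw [cfc_const_mul r f C, mul_smul_comm, smul_mul_assoc]

theorem conj_cfc_le_conj_cfc {S C : Matrix (Fin n) (Fin n) ℂ} (hS : IsSelfAdjoint S)
    {f g : ℝ → ℝ} (hfg : ∀ x ∈ spectrum ℝ C, f x ≤ g x) : S * cfc f C * S ≤ S * cfc g C * S :=
  hS.conjugate_le_conjugate (cfc_mono hfg)

end Matrix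

theorem stmt_18 {n : ℕ} (A B : Matrix (Fin n) (Fin n) ℂ)
    (hA : A.PosDef) (hB : B.PosDef) {p : ℝ} (hp : p ∈ Set.Icc (0:ℝ) 1) :
    ((2 * max p (1 - p) : ℝ) •
        (((2 : ℂ)⁻¹ • (A + B)) - A.gmean B (1/2)) -
      ((((1 - p : ℝ) : ℂ) • A + ((p : ℝ) : ℂ) • B) - A.gmean B p)).PosSemidef ∧
    (((((1 - p : ℝ) : ℂ) • A + ((p : ℝ) : ℂ) • B) - A.gmean B p) -
      (2 * min p (1 - p) : ℝ) •
        (((2 : ℂ)⁻¹ • (A + B)) - A.gmean B (1/2))).PosSemidef := by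
  set S := A.hrpow (1 / 2)
  set C := A.hrpow (-(1 / 2)) * B * A.hrpow (-(1 / 2))
  have hS : IsSelfAdjoint S := hA.1.isHermitian_hrpow _
  have hC : C.PosDef := hA.posDef_conj_hrpow_neg_half hB
  have hconvex (x : ℝ) (hx : x ∈ spectrum ℝ C) : ConvexOn ℝ (Icc 0 1) (x ^ · : ℝ → ℝ) :=
    (convexOn_rpow_left (hC.pos_of_mem_spectrum hx)).subset (subset_univ _) (convex_Icc 0 1)
  have hmid : (2 : ℂ)⁻¹ • (A + B) = ((1 - 1 / 2 : ℝ) : ℂ) • A + ((1 / 2 : ℝ) : ℂ) • B := by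
    rw [smul_add]; norm_num
  simp only [hmid, hA.smul_add_smul_sub_gmean_eq hB.1, ← le_iff, smul_conj_cfc]
  exact ⟨conj_cfc_le_conj_cfc hS fun x hx =>
      (hconvex x hx).jensenGap_le_two_mul_max_mul_jensenGap_half hp,
    conj_cfc_le_conj_cfc hS fun x hx => (hconvex x hx).two_mul_min_mul_jensenGap_half_le hp⟩
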